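/- arXiv:1609.03789 — 5 statements merged into one kernel-verified Lean document; each statement's English description precedes it below -/
import Mathlib

section
/- Let R be a unital ring with involution, a ∈ R, and n ≥ 2. Then a is dual core invertible if and only if a ∈ a(a*)^n R ∩ a^n R. Moreover, if a = a(a*)^n t for some t ∈ R (and a ∈ a^n R), then the dual core inverse of a equals t* a^{n-1}. -/
/-! The dual core inverse `x` of `a` is characterised by the equations `axa = a`, `xax = x`,
`(xa)* = xa`, `a²x = a` and `x²a = x`. Given these, iterating `a = a·a·x` gives `a = aⁿxⁿ⁻¹`,
and iterating `x* = a*x*x*` inside `a = a(xa) = a(a*x*)` gives `a = a(a*)ⁿ(x*)ⁿ`.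
Conversely, if `a = a(a*)ⁿt` then `aⁿ(a*)ⁿt = aⁿ`, so `e = t*aⁿ` satisfies `e e* = e` and is
self-adjoint; together with `a ∈ aⁿR` this makes `t*aⁿ⁻¹` satisfy the five equations, and the
equations determine `x` uniquely. -/

/-- `x` is the dual core inverse of `a`. -/
def IsDualCoreInverse {R : Type*} [Ring R] [StarRing R] (a x : R) : Prop :=
  a * x * a = a ∧
    {y : R | ∃ r : R, y = r * x} = {y : R | ∃ r : R, y = r * a} ∧
    {y : R | ∃ r : R, y = x * r} = {y : R | ∃ r : R, y = star a * r}

section MonoidIdentities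

variable {M : Type*} [Monoid M]

theorem setOf_eq_mul_left_eq_iff {x a : M} :
    {y : M | ∃ r, y = r * x} = {y | ∃ r, y = r * a} ↔ (∃ p, x = p * a) ∧ ∃ q, a = q * x := by
  constructor
  · intro h
    have hx : x ∈ {y : M | ∃ r, y = r * x} := ⟨1, (one_mul x).symm⟩
    have ha : a ∈ {y : M | ∃ r, y = r * a} := ⟨1, (one_mul a).symm⟩
    rw [h] at hx
    rw [← h] at ha
    exact ⟨hx, ha⟩
  · rintro ⟨⟨p, hp⟩, q, hq⟩
    ext y
    constructor
    · rintro ⟨r, rfl⟩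
      exact ⟨r * p, by rw [hp, mul_assoc]⟩
    · rintro ⟨r, rfl⟩
      exact ⟨r * q, by rw [hq, mul_assoc]⟩

theorem setOf_eq_mul_right_eq_iff {x a : M} :
    {y : M | ∃ r, y = x * r} = {y | ∃ r, y = a * r} ↔ (∃ p, x = a * p) ∧ ∃ q, a = x * q := by
  constructor
  · intro h
    have hx : x ∈ {y : M | ∃ r, y = x * r} := ⟨1, (mul_one x).symm⟩
    have ha : a ∈ {y : M | ∃ r, y = a * r} := ⟨1, (mul_one a).symm⟩
    rw [h] at hx
    rw [← h] at ha
    exact ⟨hx, ha⟩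
  · rintro ⟨⟨p, hp⟩, q, hq⟩
    ext y
    constructor
    · rintro ⟨r, rfl⟩
      exact ⟨p * r, by rw [hp, mul_assoc]⟩
    · rintro ⟨r, rfl⟩
      exact ⟨q * r, by rw [hq, mul_assoc]⟩

theorem pow_mul_mul_pow_eq_self {b c d : M} (h : c * b * d = b) (m : ℕ) :
    c ^ m * b * d ^ m = b := by
  induction m with
  | zero => simp
  | succ m ih =>
    calc c ^ (m + 1) * b * d ^ (m + 1) = c ^ m * (c * b * d) * d ^ m := by
          rw [pow_succ, pow_succ']; simp only [mul_assoc]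
      _ = b := by rw [h, ih]

end MonoidIdentities

section DualCoreInverse

variable {R : Type*} [Ring R] [StarRing R] {a x y : R}

theorem isDualCoreInverse_iff :
    IsDualCoreInverse a x ↔ a * x * a = a ∧ x * a * x = x ∧ IsSelfAdjoint (x * a) ∧
      a * a * x = a ∧ x * x * a = x := by
  rw [IsDualCoreInverse, setOf_eq_mul_left_eq_iff, setOf_eq_mul_right_eq_iff]
  constructor
  · rintro ⟨haxa, ⟨⟨p, hp⟩, q, hq⟩, ⟨u, hu⟩, -⟩
    have hxa_star : star (x * a) * star a = star a := by
      rw [← star_mul, ← mul_assoc, haxa]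
    have hxa_x : star (x * a) * x = x := by
      calc star (x * a) * x = star (x * a) * star a * u := by rw [mul_assoc, ← hu]
        _ = x := by rw [hxa_star, hu]
    have hsa : IsSelfAdjoint (x * a) := by
      have h := IsSelfAdjoint.star_mul_self (x * a)
      rwa [← mul_assoc, hxa_x] at h
    have hxax : x * a * x = x := by rw [← hsa.star_eq, hxa_x]
    refine ⟨haxa, hxax, hsa, ?_, ?_⟩
    · calc a * a * x = q * x * a * x := by rw [← hq]
        _ = q * (x * a * x) := by simp only [mul_assoc]
        _ = a := by rw [hxax, hq]
    · calc x * x * a = p * a * x * a := by rw [← hp]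
        _ = p * (a * x * a) := by simp only [mul_assoc]
        _ = x := by rw [haxa, hp]
  · rintro ⟨haxa, hxax, hsa, haax, hxxa⟩
    refine ⟨haxa, ⟨⟨x * x, hxxa.symm⟩, a * a, haax.symm⟩, ⟨star x * x, ?_⟩, a * star a, ?_⟩
    · rw [← mul_assoc, ← star_mul, hsa.star_eq, hxax]
    · calc star a = star (a * (x * a)) := by rw [← mul_assoc, haxa]
        _ = x * (a * star a) := by rw [star_mul, hsa.star_eq, mul_assoc]

namespace IsDualCoreInverse

theorem unique (hx : IsDualCoreInverse a x) (hy : IsDualCoreInverse a y) : x = y := by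
  obtain ⟨haxa, hxax, hxsa, haax, -⟩ := isDualCoreInverse_iff.1 hx
  obtain ⟨haya, -, hysa, -, hyya⟩ := isDualCoreInverse_iff.1 hy
  have hxa : x * a = y * a :=
    calc x * a = star (x * a) := hxsa.star_eq.symm
      _ = star (x * (a * y * a)) := by rw [haya]
      _ = star (y * a) * star (x * a) := by rw [← star_mul]; simp only [mul_assoc]
      _ = y * (a * x * a) := by rw [hxsa.star_eq, hysa.star_eq]; simp only [mul_assoc]
      _ = y * a := by rw [haxa]
  calc x = y * a * x := by rw [← hxa, hxax]
    _ = y * y * (a * a * x) := by nth_rw 1 [← hyya]; simp only [mul_assoc]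
    _ = y := by rw [haax, hyya]

theorem eq_pow_mul_pow (hx : IsDualCoreInverse a x) (n : ℕ) : a = a ^ (n + 1) * x ^ n := by
  obtain ⟨-, -, -, haax, -⟩ := isDualCoreInverse_iff.1 hx
  rw [pow_succ, pow_mul_mul_pow_eq_self haax]

theorem eq_mul_star_pow_mul_star_pow (hx : IsDualCoreInverse a x) (n : ℕ) :
    a = a * star a ^ (n + 1) * star x ^ (n + 1) := by
  obtain ⟨haxa, -, hsa, -, hxxa⟩ := isDualCoreInverse_iff.1 hx
  have hx_star : star a * star x * star x = star x := by
    simpa only [star_mul, mul_assoc] using congrArg star hxxa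
  have hxa : x * a = star a ^ (n + 1) * star x ^ (n + 1) :=
    calc x * a = star a * star x := by rw [← star_mul, hsa.star_eq]
      _ = star a * (star a ^ n * star x * star x ^ n) := by
        rw [pow_mul_mul_pow_eq_self hx_star n]
      _ = star a ^ (n + 1) * star x ^ (n + 1) := by
        rw [pow_succ', pow_succ']; simp only [mul_assoc]
  rw [mul_assoc, ← hxa, ← mul_assoc, haxa]

end IsDualCoreInverse

end DualCoreInverse

section StarMonoid

variable {R : Type*} [Monoid R] [StarMul R] {a t : R} {n : ℕ}

theorem pow_succ_mul_star_pow_mul_eq (ht : a = a * star a ^ n * t) (j : ℕ) :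
    a ^ (j + 1) * (star a ^ n * t) = a ^ (j + 1) := by
  rw [pow_succ, mul_assoc, ← mul_assoc a, ← ht]

theorem mul_star_mul_pow_eq (ht : a = a * star a ^ (n + 1) * t) :
    a * (star t * a ^ (n + 1)) = a := by
  have hstar : star t * a ^ (n + 1) * star a = star a := by
    simpa only [star_mul, star_pow, star_star, mul_assoc] using (congrArg star ht).symm
  calc a * (star t * a ^ (n + 1))
      = a * (star t * (a ^ (n + 1) * (star a ^ (n + 1) * t))) := by
        rw [pow_succ_mul_star_pow_mul_eq ht]
    _ = a * (star t * a ^ (n + 1) * star a) * (star a ^ n * t) := by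
        rw [pow_succ' (star a)]; simp only [mul_assoc]
    _ = a * star a ^ (n + 1) * t := by rw [hstar, pow_succ']; simp only [mul_assoc]
    _ = a := ht.symm

theorem isSelfAdjoint_star_mul_pow (ht : a = a * star a ^ (n + 1) * t) :
    IsSelfAdjoint (star t * a ^ (n + 1)) := by
  have h : star t * a ^ (n + 1) * star (star t * a ^ (n + 1)) = star t * a ^ (n + 1) := by
    simp only [star_mul, star_star, star_pow, mul_assoc]
    rw [pow_succ_mul_star_pow_mul_eq ht]
  simpa only [h] using IsSelfAdjoint.mul_star_self (star t * a ^ (n + 1))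

end StarMonoid

theorem isDualCoreInverse_star_mul_pow {R : Type*} [Ring R] [StarRing R] {a t s : R} {n : ℕ}
    (ht : a = a * star a ^ (n + 2) * t) (hs : a = a ^ (n + 2) * s) :
    IsDualCoreInverse a (star t * a ^ (n + 1)) := by
  set x := star t * a ^ (n + 1) with hx_def
  have hxa : x * a = star t * a ^ (n + 2) := by rw [hx_def, mul_assoc, ← pow_succ]
  have haxa : a * x * a = a := by rw [mul_assoc, hxa, mul_star_mul_pow_eq ht]
  have haw : a * a * (a ^ n * s) = a :=
    calc a * a * (a ^ n * s) = a ^ (n + 2) * s := by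
          rw [pow_succ', pow_succ']; simp only [mul_assoc]
      _ = a := hs.symm
  have hax : a * x = a * (a ^ n * s) :=
    calc a * x = a * star t * (a ^ n * a) := by rw [hx_def, pow_succ]; simp only [mul_assoc]
      _ = a * star t * (a ^ n * (a * a * (a ^ n * s))) := by rw [haw]
      _ = a * (star t * a ^ (n + 2)) * (a ^ n * s) := by
        rw [pow_succ _ (n + 1), pow_succ]; simp only [mul_assoc]
      _ = a * (a ^ n * s) := by rw [mul_star_mul_pow_eq ht]
  have haax : a * a * x = a := by rw [mul_assoc, hax, ← mul_assoc, haw]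
  have hxax : x * a * x = x :=
    calc x * a * x = star t * a ^ n * (a * a * x) := by
          rw [hxa, pow_succ _ (n + 1), pow_succ]; simp only [mul_assoc]
      _ = x := by rw [haax, mul_assoc, ← pow_succ]
  have hxxa : x * x * a = x :=
    calc x * x * a = star t * a ^ n * (a * (star t * a ^ (n + 2))) := by
          rw [mul_assoc, hxa, hx_def, pow_succ]; simp only [mul_assoc]
      _ = x := by rw [mul_star_mul_pow_eq ht, mul_assoc, ← pow_succ]
  have hsa : IsSelfAdjoint (x * a) := hxa ▸ isSelfAdjoint_star_mul_pow ht
  exact isDualCoreInverse_iff.2 ⟨haxa, hxax, hsa, haax, hxxa⟩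

theorem stmt_7 {R : Type*} [Ring R] [StarRing R] (a : R) (n : ℕ) (hn : 2 ≤ n) :
    ((∃ x : R, IsDualCoreInverse a x) ↔
      ((∃ t : R, a = a * (star a) ^ n * t) ∧ (∃ t : R, a = a ^ n * t))) ∧
    (∀ x t : R, IsDualCoreInverse a x → a = a * (star a) ^ n * t →
      (∃ s : R, a = a ^ n * s) → x = star t * a ^ (n - 1)) := by
  obtain ⟨k, rfl⟩ : ∃ k, n = k + 2 := ⟨n - 2, by omega⟩
  refine ⟨⟨fun ⟨x, hx⟩ => ?_, fun ⟨⟨t, ht⟩, s, hs⟩ => ⟨_, isDualCoreInverse_star_mul_pow ht hs⟩⟩,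
    fun x t hx ht ⟨s, hs⟩ => hx.unique (isDualCoreInverse_star_mul_pow ht hs)⟩
  exact ⟨⟨_, hx.eq_mul_star_pow_mul_star_pow (k + 1)⟩, _, hx.eq_pow_mul_pow (k + 1)⟩
end

section
/- Let R be a unital ring with involution, a ∈ R, and n ≥ 2. Then a is both Moore-Penrose invertible and group invertible if and only if a ∈ a(a*)^n R ∩ R(a*)^n a. In this case, if a = s(a*)^n a = a(a*)^n t, then a† = t* a^{2n-1} s*. -/
/-!
If `x` is the Moore–Penrose inverse and `y` the group inverse of `a`, then `a = a a* x* = x* a* a`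
and `a* = a* a* y* = y* a* a*`; iterating the latter replaces `a*` by `(a*)ⁿ (y*)ⁿ⁻¹`
resp. `(y*)ⁿ⁻¹ (a*)ⁿ`.

Conversely, `a = s (a*)ⁿ a` makes `p = aⁿ⁻¹ s*` a `{1,3}`-inverse of `a` (`a p a = a`, `a p`
self-adjoint), and dually `a = a (a*)ⁿ t` makes `q = t* aⁿ⁻¹` a `{1,4}`-inverse, so
`q a p = t* a²ⁿ⁻¹ s*` is the Moore–Penrose inverse. Taking adjoints, `a = s (a*)ⁿ a` also forces
`a = aⁿ s* a ∈ a² R` once `n ≥ 2`; dually `a ∈ R a²`, and these two give a group inverse.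
-/

/-- `x` is a Moore–Penrose inverse of `a`. -/
def IsMPInverse {R : Type*} [Ring R] [StarRing R] (a x : R) : Prop :=
  a * x * a = a ∧ x * a * x = x ∧ star (a * x) = a * x ∧ star (x * a) = x * a

/-- `x` is a group inverse of `a`. -/
def IsGroupInverse {R : Type*} [Ring R] (a x : R) : Prop :=
  a * x * a = a ∧ x * a * x = x ∧ a * x = x * a

section Monoid

variable {M : Type*} [Monoid M] {b c : M}

theorem eq_pow_succ_mul_pow_of_eq_mul_mul (h : b = b * b * c) (k : ℕ) :
    b = b ^ (k + 1) * c ^ k := by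
  induction k with
  | zero => simp
  | succ k ih =>
    calc b = b * b * c := h
      _ = b * (b ^ (k + 1) * c ^ k) * c := by rw [← ih]
      _ = b ^ (k + 1 + 1) * c ^ (k + 1) := by
        rw [pow_succ' b (k + 1), pow_succ c k]; simp only [mul_assoc]

theorem eq_pow_mul_pow_succ_of_eq_mul_mul (h : b = c * b * b) (k : ℕ) :
    b = c ^ k * b ^ (k + 1) := by
  induction k with
  | zero => simp
  | succ k ih =>
    calc b = c * b * b := h
      _ = c * (c ^ k * b ^ (k + 1)) * b := by rw [← ih]
      _ = c ^ (k + 1) * b ^ (k + 1 + 1) := by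
        rw [pow_succ' c k, pow_succ b (k + 1)]; simp only [mul_assoc]

end Monoid

section StarMonoid

variable {M : Type*} [Monoid M] [StarMul M] {a s t : M} {n : ℕ}

theorem eq_pow_succ_mul_star_mul_of_eq_mul_star_pow_mul
    (h : a = s * star a ^ (n + 1) * a) : a = a ^ (n + 1) * (star s * a) := by
  have hstar : star a = star a * a ^ (n + 1) * star s := by
    simpa only [star_mul, star_pow, star_star, mul_assoc] using congrArg star h
  calc a = s * star a ^ (n + 1) * a := h
    _ = s * star a ^ n * (star a * a) := by rw [pow_succ]; simp only [mul_assoc]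
    _ = s * star a ^ n * (star a * a ^ (n + 1) * star s * a) := by rw [← hstar]
    _ = (s * star a ^ (n + 1) * a) * a ^ n * (star s * a) := by
        rw [pow_succ (star a), pow_succ' a]; simp only [mul_assoc]
    _ = a ^ (n + 1) * (star s * a) := by rw [← h, pow_succ']

theorem eq_mul_star_mul_pow_succ_of_eq_mul_star_pow_mul
    (h : a = a * star a ^ (n + 1) * t) : a = a * star t * a ^ (n + 1) := by
  have hstar : star a = star t * star (star a) ^ (n + 1) * star a := by
    simpa only [star_mul, star_pow, star_star, mul_assoc] using congrArg star h
  simpa only [star_mul, star_pow, star_star, mul_assoc] using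
    congrArg star (eq_pow_succ_mul_star_mul_of_eq_mul_star_pow_mul hstar)

end StarMonoid

section GroupInverse

variable {R : Type*} [Ring R] {a u v y : R}

theorem IsGroupInverse.eq_mul_mul (h : IsGroupInverse a y) : a = a * a * y := by
  rw [mul_assoc, h.2.2, ← mul_assoc, h.1]

theorem IsGroupInverse.eq_mul_mul' (h : IsGroupInverse a y) : a = y * a * a := by
  rw [← h.2.2, h.1]

theorem isGroupInverse_mul_mul (hu : a = a * a * u) (hv : a = v * a * a) :
    IsGroupInverse a (v * a * u) := by
  have hau : a * u = v * a := by
    calc a * u = v * a * a * u := by rw [← hv]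
      _ = v * (a * a * u) := by simp only [mul_assoc]
      _ = v * a := by rw [← hu]
  have hg : v * a * u = v * v * a := by rw [mul_assoc v, hau, mul_assoc]
  have hleft : a * (v * a * u) = a * u := by
    calc a * (v * a * u) = a * (a * u * u) := by rw [hau]
      _ = a * a * u * u := by simp only [mul_assoc]
      _ = a * u := by rw [← hu]
  have hright : v * a * u * a = a * u := by
    calc v * a * u * a = v * (v * a * a) := by rw [hg]; simp only [mul_assoc]
      _ = a * u := by rw [← hv, hau]
  refine ⟨?_, ?_, ?_⟩
  · rw [hleft, hau, ← hv]
  · calc v * a * u * a * (v * a * u) = v * (a * (v * a * u)) := by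
          rw [hright, hau]; simp only [mul_assoc]
      _ = v * a * u := by rw [hleft, hau, hg, mul_assoc]
  · rw [hleft, hright]

end GroupInverse

section MPInverse

variable {R : Type*} [Ring R] [StarRing R] {a p q s t x x' y : R}

theorem IsMPInverse.unique (h : IsMPInverse a x) (h' : IsMPInverse a x') : x = x' := by
  obtain ⟨h1, h2, h3, h4⟩ := h
  obtain ⟨h1', h2', h3', h4'⟩ := h'
  have hax : a * x = a * x' := by
    calc a * x = star (a * x') * star (a * x) := by rw [h3, h3', ← mul_assoc, h1']
      _ = a * x' := by rw [← star_mul, ← mul_assoc, h1, h3']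
  have hxa : x * a = x' * a := by
    calc x * a = star (x * a) * star (x' * a) := by
          rw [h4, h4', mul_assoc x a, ← mul_assoc a x' a, h1']
      _ = x' * a := by rw [← star_mul, mul_assoc x', ← mul_assoc a, h1, h4']
  calc x = x' * a * x := by rw [← hxa, h2]
    _ = x' := by rw [mul_assoc, hax, ← mul_assoc, h2']

theorem IsMPInverse.eq_mul_star_mul_star (h : IsMPInverse a x) : a = a * star a * star x := by
  rw [mul_assoc, ← star_mul, h.2.2.2, ← mul_assoc, h.1]

theorem IsMPInverse.eq_star_mul_star_mul (h : IsMPInverse a x) : a = star x * star a * a := by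
  rw [← star_mul, h.2.2.1, h.1]

theorem IsMPInverse.exists_eq_mul_star_pow_mul (hx : IsMPInverse a x) (hy : IsGroupInverse a y)
    (n : ℕ) : (∃ r, a = a * star a ^ (n + 1) * r) ∧ (∃ r, a = r * star a ^ (n + 1) * a) := by
  have hright : star a = star a * star a * star y := by
    simpa only [star_mul, mul_assoc] using congrArg star hy.eq_mul_mul'
  have hleft : star a = star y * star a * star a := by
    simpa only [star_mul, mul_assoc] using congrArg star hy.eq_mul_mul
  refine ⟨⟨star y ^ n * star x, ?_⟩, ⟨star x * star y ^ n, ?_⟩⟩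
  · calc a = a * star a * star x := hx.eq_mul_star_mul_star
      _ = a * (star a ^ (n + 1) * star y ^ n) * star x := by
        rw [← eq_pow_succ_mul_pow_of_eq_mul_mul hright]
      _ = a * star a ^ (n + 1) * (star y ^ n * star x) := by simp only [mul_assoc]
  · calc a = star x * star a * a := hx.eq_star_mul_star_mul
      _ = star x * (star y ^ n * star a ^ (n + 1)) * a := by
        rw [← eq_pow_mul_pow_succ_of_eq_mul_mul hleft]
      _ = star x * star y ^ n * star a ^ (n + 1) * a := by simp only [mul_assoc]

theorem mul_eq_star_mul_star_of_eq_star_mul_star_mul (h : a = star p * star a * a) :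
    a * p = star p * star a := by
  have hstar : star a = star a * a * p := by
    simpa only [star_mul, star_star, mul_assoc] using congrArg star h
  calc a * p = star p * (star a * a * p) := by
        conv_lhs => rw [h]
        simp only [mul_assoc]
    _ = star p * star a := by rw [← hstar]

theorem mul_eq_star_mul_star_of_eq_mul_star_mul_star (h : a = a * star a * star q) :
    q * a = star a * star q := by
  have hstar : star a = q * a * star a := by
    simpa only [star_mul, star_star, mul_assoc] using congrArg star h
  calc q * a = q * a * star a * star q := by
        conv_lhs => rw [h]
        simp only [mul_assoc]
    _ = star a * star q := by rw [← hstar]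

theorem isMPInverse_mul_mul (hp : a = star p * star a * a) (hq : a = a * star a * star q) :
    IsMPInverse a (q * a * p) := by
  have hp' := mul_eq_star_mul_star_of_eq_star_mul_star_mul hp
  have hq' := mul_eq_star_mul_star_of_eq_mul_star_mul_star hq
  have hapa : a * p * a = a := by rw [hp', ← hp]
  have haqa : a * q * a = a := by rw [mul_assoc, hq', ← mul_assoc, ← hq]
  have hax : a * (q * a * p) = a * p := by rw [← mul_assoc, ← mul_assoc, haqa]
  have hxa : q * a * p * a = q * a := by rw [mul_assoc q a p, mul_assoc q, hapa]
  refine ⟨?_, ?_, ?_, ?_⟩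
  · rw [hax, hapa]
  · rw [hxa, mul_assoc q a, hax, ← mul_assoc]
  · rw [hax, hp', star_mul, star_star, star_star, ← hp']
  · rw [hxa, hq', star_mul, star_star, star_star, ← hq']

theorem isMPInverse_of_eq_mul_star_pow_mul {n : ℕ} (hs : a = s * star a ^ (n + 1) * a)
    (ht : a = a * star a ^ (n + 1) * t) : IsMPInverse a (star t * a ^ (2 * n + 1) * star s) := by
  have hp : a = star (a ^ n * star s) * star a * a := by
    rwa [star_mul, star_star, star_pow, mul_assoc s, ← pow_succ]
  have hq : a = a * star a * star (star t * a ^ n) := by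
    rwa [star_mul, star_star, star_pow, ← mul_assoc, mul_assoc a, ← pow_succ']
  convert isMPInverse_mul_mul hp hq using 1
  rw [show 2 * n + 1 = n + 1 + n by ring, pow_add, pow_succ]
  simp only [mul_assoc]

theorem exists_isGroupInverse_of_eq_mul_star_pow_mul {n : ℕ}
    (hs : a = s * star a ^ (n + 2) * a) (ht : a = a * star a ^ (n + 2) * t) :
    ∃ y, IsGroupInverse a y := by
  have hu : a = a * a * (a ^ n * (star s * a)) := by
    conv_lhs => rw [eq_pow_succ_mul_star_mul_of_eq_mul_star_pow_mul hs]
    rw [pow_succ', pow_succ']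
    simp only [mul_assoc]
  have hv : a = a * star t * a ^ n * a * a := by
    conv_lhs => rw [eq_mul_star_mul_pow_succ_of_eq_mul_star_pow_mul ht]
    rw [pow_succ, pow_succ]
    simp only [mul_assoc]
  exact ⟨_, isGroupInverse_mul_mul hu hv⟩

end MPInverse

theorem stmt_9 {R : Type*} [Ring R] [StarRing R] (a : R) (n : ℕ) (hn : 2 ≤ n) :
    (((∃ x : R, IsMPInverse a x) ∧ (∃ y : R, IsGroupInverse a y)) ↔
      ((∃ r : R, a = a * (star a) ^ n * r) ∧ (∃ r : R, a = r * (star a) ^ n * a))) ∧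
    (∀ x s t : R, IsMPInverse a x → a = s * (star a) ^ n * a →
      a = a * (star a) ^ n * t → x = star t * a ^ (2 * n - 1) * star s) := by
  obtain ⟨m, rfl⟩ : ∃ m, n = m + 2 := ⟨n - 2, by omega⟩
  refine ⟨⟨?_, ?_⟩, ?_⟩
  · rintro ⟨⟨x, hx⟩, ⟨y, hy⟩⟩
    exact hx.exists_eq_mul_star_pow_mul hy (m + 1)
  · rintro ⟨⟨t, ht⟩, ⟨s, hs⟩⟩
    exact ⟨⟨_, isMPInverse_of_eq_mul_star_pow_mul (n := m + 1) hs ht⟩,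
      exists_isGroupInverse_of_eq_mul_star_pow_mul hs ht⟩
  · intro x s t hx hs ht
    rw [show 2 * (m + 2) - 1 = 2 * (m + 1) + 1 by omega]
    exact hx.unique (isMPInverse_of_eq_mul_star_pow_mul hs ht)
end

section
/- Let R be a unital ring with involution, a ∈ R, and n ≥ 2. Then a is core invertible if and only if there exists a Hermitian element p (p* = p) such that pa = 0 and a^n + p is invertible. In that case, the core inverse of a is a^{n-1}(a^n + p)^{-1}. -/
/-!
Write `p := 1 - a x` for a core inverse `x` of `a`. The core inverse is characterised by the three
equations `(a x)* = a x`, `a x² = x`, `x a² = a`; these make `a x` and `x a` idempotents that act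
as identities on the powers of `a` and `x`, so `a ^ n + (1 - a x)` has inverse `x ^ n + (1 - x a)`.
Conversely, if `u = a ^ n + p` is a unit with `p* = p` and `p a = 0`, then `p u = p² = u* p`, so
`p u⁻¹ = (u⁻¹)* p`; hence `a (a ^ (n - 1) u⁻¹) = 1 - p u⁻¹` is Hermitian, and the three equations
hold for `a ^ (n - 1) u⁻¹` because `p u⁻¹ a = (u⁻¹)* p a = 0` kills `p u⁻¹ a ^ (n - 1)` once
`n ≥ 2`. Uniqueness of core inverses gives the formula.
-/

/-- `x` is the core inverse of `a`. -/
def IsCoreInverse {R : Type*} [Ring R] [StarRing R] (a x : R) : Prop :=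
  a * x * a = a ∧
    {y : R | ∃ r : R, y = x * r} = {y : R | ∃ r : R, y = a * r} ∧
    {y : R | ∃ r : R, y = r * x} = {y : R | ∃ r : R, y = r * star a}

section Monoid

variable {M : Type*} [Monoid M] {a x : M}

theorem inner_inverse_of_mul_mul_self (hx : a * x * x = x) (ha : x * a * a = a) :
    a * x * a = a :=
  calc a * x * a = a * x * (x * a * a) := by rw [ha]
    _ = (a * x * x) * a * a := by simp only [mul_assoc]
    _ = a := by rw [hx, ha]

theorem outer_inverse_of_mul_mul_self (hx : a * x * x = x) (ha : x * a * a = a) :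
    x * a * x = x :=
  calc x * a * x = x * a * (a * x * x) := by rw [hx]
    _ = (x * a * a) * x * x := by simp only [mul_assoc]
    _ = x := by rw [ha, hx]

theorem pow_succ_mul_pow_succ_of_mul_mul_self (hx : a * x * x = x) (m : ℕ) :
    a ^ (m + 1) * x ^ (m + 1) = a * x := by
  induction m with
  | zero => simp only [zero_add, pow_one]
  | succ m ih =>
    calc a ^ (m + 2) * x ^ (m + 2) = a ^ (m + 1) * ((a * x * x) * x ^ m) := by
          rw [pow_succ a (m + 1), pow_succ' x (m + 1), pow_succ' x m]; simp only [mul_assoc]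
      _ = a * x := by rw [hx, ← pow_succ', ih]

theorem pow_succ_mul_mul_of_mul_mul_eq (h : a * x * a = a) (m : ℕ) :
    a ^ (m + 1) * (x * a) = a ^ (m + 1) := by
  rw [pow_succ, mul_assoc, ← mul_assoc a, h]

theorem mul_mul_pow_succ_of_mul_mul_self (h : a * x * x = x) (m : ℕ) :
    a * x * x ^ (m + 1) = x ^ (m + 1) := by
  rw [pow_succ', ← mul_assoc, h]

end Monoid

theorem star_eq_self_of_star_eq_mul_star {M : Type*} [Mul M] [StarMul M] {e : M}
    (h : star e = e * star e) : star e = e := by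
  have he : e = e * star e := by simpa only [star_mul, star_star] using congrArg star h
  exact h.trans he.symm

theorem Units.mul_inv_eq_star_inv_mul {M : Type*} [Monoid M] [StarMul M] {p : M} (u : Mˣ)
    (h : p * u = star (u : M) * p) :
    p * ↑u⁻¹ = star (↑u⁻¹ : M) * p :=
  calc p * ↑u⁻¹ = star (↑u⁻¹ : M) * (star (u : M) * p) * ↑u⁻¹ := by
        rw [← mul_assoc, ← star_mul, u.mul_inv, star_one, one_mul]
    _ = star (↑u⁻¹ : M) * p := by rw [← h, mul_assoc, mul_assoc, u.mul_inv, mul_one]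

theorem setOf_exists_eq_mul_eq_iff {M : Type*} [Monoid M] {a b : M} :
    {y : M | ∃ r, y = a * r} = {y : M | ∃ r, y = b * r} ↔
      (∃ s, a = b * s) ∧ ∃ t, b = a * t := by
  constructor
  · intro h
    exact ⟨(Set.ext_iff.1 h a).1 ⟨1, (mul_one a).symm⟩,
      (Set.ext_iff.1 h b).2 ⟨1, (mul_one b).symm⟩⟩
  · rintro ⟨⟨s, hs⟩, ⟨t, ht⟩⟩
    ext y
    constructor
    · rintro ⟨r, rfl⟩; exact ⟨s * r, by rw [hs, mul_assoc]⟩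
    · rintro ⟨r, rfl⟩; exact ⟨t * r, by rw [ht, mul_assoc]⟩

theorem setOf_exists_eq_mul_left_eq_iff {M : Type*} [Monoid M] {a b : M} :
    {y : M | ∃ r, y = r * a} = {y : M | ∃ r, y = r * b} ↔
      (∃ s, a = s * b) ∧ ∃ t, b = t * a := by
  constructor
  · intro h
    exact ⟨(Set.ext_iff.1 h a).1 ⟨1, (one_mul a).symm⟩,
      (Set.ext_iff.1 h b).2 ⟨1, (one_mul b).symm⟩⟩
  · rintro ⟨⟨s, hs⟩, ⟨t, ht⟩⟩
    ext y
    constructor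
    · rintro ⟨r, rfl⟩; exact ⟨r * s, by rw [hs, mul_assoc]⟩
    · rintro ⟨r, rfl⟩; exact ⟨r * t, by rw [ht, mul_assoc]⟩

section Ring

variable {R : Type*} [Ring R] {a x : R}

theorem pow_succ_add_one_sub_mul_mul_eq_one (hx : a * x * x = x) (ha : x * a * a = a) (m : ℕ) :
    (a ^ (m + 1) + (1 - a * x)) * (x ^ (m + 1) + (1 - x * a)) = 1 := by
  calc (a ^ (m + 1) + (1 - a * x)) * (x ^ (m + 1) + (1 - x * a))
        = a ^ (m + 1) * x ^ (m + 1) + (a ^ (m + 1) - a ^ (m + 1) * (x * a))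
          + (x ^ (m + 1) - a * x * x ^ (m + 1)) + (1 - a * x - x * a + a * x * x * a) := by
        noncomm_ring
    _ = 1 := by
        rw [pow_succ_mul_pow_succ_of_mul_mul_self hx,
          pow_succ_mul_mul_of_mul_mul_eq (inner_inverse_of_mul_mul_self hx ha),
          mul_mul_pow_succ_of_mul_mul_self hx, hx]
        abel

theorem isUnit_pow_succ_add_one_sub_mul (hx : a * x * x = x) (ha : x * a * a = a) (m : ℕ) :
    IsUnit (a ^ (m + 1) + (1 - a * x)) :=
  ⟨⟨_, _, pow_succ_add_one_sub_mul_mul_eq_one hx ha m,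
    pow_succ_add_one_sub_mul_mul_eq_one ha hx m⟩, rfl⟩

end Ring

section StarRing

variable {R : Type*} [Ring R] [StarRing R] {a x : R}

theorem isCoreInverse_iff :
    IsCoreInverse a x ↔ star (a * x) = a * x ∧ a * x * x = x ∧ x * a * a = a := by
  constructor
  · rintro ⟨haxa, hxR, hRx⟩
    obtain ⟨⟨s, hs⟩, ⟨t, ht⟩⟩ := setOf_exists_eq_mul_eq_iff.1 hxR
    obtain ⟨⟨r, hr⟩, -⟩ := setOf_exists_eq_mul_left_eq_iff.1 hRx
    have hherm : star (a * x) = a * x := by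
      refine star_eq_self_of_star_eq_mul_star ?_
      calc star (a * x) = a * (star r * star a) := by
            rw [star_mul, hr, star_mul, star_star, mul_assoc]
        _ = a * x * a * (star r * star a) := by rw [haxa]
        _ = a * x * star (a * x) := by rw [hr, star_mul, star_mul, star_star]; noncomm_ring
    have hstar_a : star a * (a * x) = star a := by
      rw [← hherm, ← star_mul, haxa]
    have hxax : x * a * x = x := by
      calc x * a * x = r * (star a * (a * x)) := by rw [hr]; noncomm_ring
        _ = x := by rw [hstar_a, hr]
    refine ⟨hherm, ?_, ?_⟩
    · calc a * x * x = a * x * a * s := by rw [hs]; noncomm_ring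
        _ = x := by rw [haxa, hs]
    · calc x * a * a = x * a * x * t := by rw [ht]; noncomm_ring
        _ = a := by rw [hxax, ht]
  · rintro ⟨hherm, hx, ha⟩
    have haxa := inner_inverse_of_mul_mul_self hx ha
    have hxax := outer_inverse_of_mul_mul_self hx ha
    refine ⟨haxa, setOf_exists_eq_mul_eq_iff.2 ⟨⟨x * x, ?_⟩, ⟨a * a, ?_⟩⟩,
      setOf_exists_eq_mul_left_eq_iff.2 ⟨⟨x * star x, ?_⟩, ⟨star a * a, ?_⟩⟩⟩
    · rw [← mul_assoc, hx]
    · rw [← mul_assoc, ha]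
    · calc x = x * star (a * x) := by rw [hherm, ← mul_assoc, hxax]
        _ = x * star x * star a := by rw [star_mul, mul_assoc]
    · calc star a = star a * star (a * x) := by rw [← star_mul, haxa]
        _ = star a * a * x := by rw [hherm, mul_assoc]

theorem IsCoreInverse.unique {y : R} (hx : IsCoreInverse a x) (hy : IsCoreInverse a y) :
    x = y := by
  obtain ⟨hxherm, hx, hxa⟩ := isCoreInverse_iff.1 hx
  obtain ⟨hyherm, hy, hya⟩ := isCoreInverse_iff.1 hy
  have hxax := outer_inverse_of_mul_mul_self hx hxa
  have haya := inner_inverse_of_mul_mul_self hy hya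
  have hx_eq : x = x * star x * star a := by
    calc x = x * star (a * x) := by rw [hxherm, ← mul_assoc, hxax]
      _ = x * star x * star a := by rw [star_mul, mul_assoc]
  have hstar_a : star a = star a * a * y := by
    calc star a = star a * star (a * y) := by rw [← star_mul, haya]
      _ = star a * a * y := by rw [hyherm, mul_assoc]
  calc x = x * star x * (star a * a * y) := by rw [← hstar_a, ← hx_eq]
    _ = x * a * y := by rw [← mul_assoc, ← mul_assoc, ← hx_eq]
    _ = x * a * (a * y * y) := by rw [hy]
    _ = (x * a * a) * y * y := by simp only [mul_assoc]
    _ = y := by rw [hxa, hy]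

theorem isCoreInverse_pow_succ_mul_inv {p : R} {k : ℕ} (hp : star p = p) (hpa : p * a = 0)
    (u : Rˣ) (hu : (u : R) = a ^ (k + 2) + p) :
    IsCoreInverse a (a ^ (k + 1) * ↑u⁻¹) := by
  have hpa_pow : ∀ m, p * a ^ (m + 1) = 0 := fun m => by
    rw [pow_succ', ← mul_assoc, hpa, zero_mul]
  have hpv : p * ↑u⁻¹ = star (↑u⁻¹ : R) * p := by
    refine u.mul_inv_eq_star_inv_mul ?_
    have hstar_ap : star a * p = 0 := by rw [← hp, ← star_mul, hpa, star_zero]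
    rw [hu, star_add, star_pow, hp, mul_add, add_mul, hpa_pow, pow_succ, mul_assoc, hstar_ap,
      mul_zero]
  have hpva : p * ↑u⁻¹ * a = 0 := by rw [hpv, mul_assoc, hpa, mul_zero]
  have hax : a * (a ^ (k + 1) * ↑u⁻¹) = 1 - p * ↑u⁻¹ := by
    rw [← mul_assoc, ← pow_succ', eq_sub_iff_add_eq, ← add_mul, ← hu, u.mul_inv]
  have haxa : a * (a ^ (k + 1) * ↑u⁻¹) * a = a := by rw [hax, sub_mul, one_mul, hpva, sub_zero]
  have hux : (u : R) * (a ^ (k + 1) * ↑u⁻¹) = a ^ (k + 1) * (a * (a ^ (k + 1) * ↑u⁻¹)) := by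
    rw [hu, add_mul, ← mul_assoc p, hpa_pow, zero_mul, add_zero]
    noncomm_ring
  refine isCoreInverse_iff.2 ⟨?_, ?_, ?_⟩
  · rw [hax, star_sub, star_one, star_mul, hp, hpv]
  · rw [hax, sub_mul, one_mul, sub_eq_self]
    simp only [pow_succ', ← mul_assoc, hpva, zero_mul]
  · calc a ^ (k + 1) * ↑u⁻¹ * a * a = ↑u⁻¹ * (↑u * (a ^ (k + 1) * ↑u⁻¹) * a * a) := by
          simp only [← mul_assoc, u.inv_mul, one_mul]
      _ = ↑u⁻¹ * (a ^ (k + 1) * (a * (a ^ (k + 1) * ↑u⁻¹) * a) * a) := by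
          rw [hux]; simp only [mul_assoc]
      _ = ↑u⁻¹ * (↑u * a) := by
          rw [haxa, hu, add_mul, hpa, add_zero, ← pow_succ]
      _ = a := by rw [← mul_assoc, u.inv_mul, one_mul]

end StarRing

theorem stmt_10 {R : Type*} [Ring R] [StarRing R] (a : R) (n : ℕ) (hn : 2 ≤ n) :
    ((∃ x : R, IsCoreInverse a x) ↔
      (∃ p : R, star p = p ∧ p * a = 0 ∧ IsUnit (a ^ n + p))) ∧
    (∀ (x p : R) (u : Rˣ), IsCoreInverse a x → star p = p → p * a = 0 →
      (u : R) = a ^ n + p → x = a ^ (n - 1) * (↑u⁻¹ : R)) := by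
  obtain ⟨k, rfl⟩ : ∃ k, n = k + 2 := ⟨n - 2, by omega⟩
  refine ⟨⟨?_, ?_⟩, fun x p u hx hp hpa hu =>
    hx.unique (isCoreInverse_pow_succ_mul_inv hp hpa u hu)⟩
  · rintro ⟨x, hx⟩
    obtain ⟨hherm, hxx, hxaa⟩ := isCoreInverse_iff.1 hx
    refine ⟨1 - a * x, by rw [star_sub, star_one, hherm], ?_,
      isUnit_pow_succ_add_one_sub_mul hxx hxaa (k + 1)⟩
    rw [sub_mul, one_mul, inner_inverse_of_mul_mul_self hxx hxaa, sub_self]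
  · rintro ⟨p, hp, hpa, u, hu⟩
    exact ⟨_, isCoreInverse_pow_succ_mul_inv hp hpa u hu⟩
end

section
/- Let R be a unital ring with involution and a ∈ R core invertible with core inverse a°. Then a + 1 - a a° is invertible with inverse a° + 1 - a° a. -/
theorem add_one_sub_mul_mul_add_one_sub_mul_eq_one {R : Type*} [Ring R] {a c : R}
    (haca : a * c * a = a) (hacc : a * c * c = c) :
    (a + 1 - a * c) * (c + 1 - c * a) = 1 := by
  have hacca : a * c * (c * a) = c * a := by rw [← mul_assoc, hacc]
  calc (a + 1 - a * c) * (c + 1 - c * a)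
      = 1 + (a - a * c * a) + (c - a * c * c) - (c * a - a * c * (c * a)) := by noncomm_ring
    _ = 1 := by rw [haca, hacc, hacca]; simp

section Ideals

variable {R : Type*} [Semiring R] {x a : R}

theorem exists_eq_mul_of_setOf_mul_eq (h : {y : R | ∃ r, y = x * r} = {y | ∃ r, y = a * r}) :
    ∃ r, x = a * r := by
  have hx : x ∈ {y : R | ∃ r, y = x * r} := ⟨1, (mul_one x).symm⟩
  rwa [h] at hx

theorem exists_eq_mul_of_setOf_mul_eq' (h : {y : R | ∃ r, y = r * x} = {y | ∃ r, y = r * a}) :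
    ∃ r, x = r * a := by
  have hx : x ∈ {y : R | ∃ r, y = r * x} := ⟨1, (one_mul x).symm⟩
  rwa [h] at hx

end Ideals

namespace IsCoreInverse

variable {R : Type*} [Ring R] [StarRing R] {a c : R}

theorem eq_mul_star_mul_star (hc : IsCoreInverse a c) : c = c * star c * star a := by
  obtain ⟨u, hu⟩ := exists_eq_mul_of_setOf_mul_eq' hc.2.2
  have hstar : star a * star c * star a = star a := by
    simpa only [star_mul, mul_assoc] using congrArg star hc.1
  calc c = u * (star a * star c * star a) := by rw [hstar, hu]
    _ = c * star c * star a := by rw [hu]; noncomm_ring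

theorem isSelfAdjoint_self_mul_inv (hc : IsCoreInverse a c) : IsSelfAdjoint (a * c) := by
  have h : a * c = a * c * star (a * c) := by
    conv_lhs => rw [hc.eq_mul_star_mul_star]
    rw [star_mul]; noncomm_ring
  rw [IsSelfAdjoint, h, star_mul, star_star]

theorem inv_mul_self_mul_inv (hc : IsCoreInverse a c) : c * a * c = c := by
  calc c * a * c = c * star (a * c) := by rw [hc.isSelfAdjoint_self_mul_inv.star_eq, mul_assoc]
    _ = c := by rw [star_mul, ← mul_assoc, ← hc.eq_mul_star_mul_star]

theorem self_mul_inv_mul_inv (hc : IsCoreInverse a c) : a * c * c = c := by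
  obtain ⟨s, hs⟩ := exists_eq_mul_of_setOf_mul_eq hc.2.1
  calc a * c * c = a * c * a * s := by rw [mul_assoc (a * c), ← hs]
    _ = c := by rw [hc.1, hs]

theorem inv_mul_self_mul_self (hc : IsCoreInverse a c) : c * a * a = a := by
  obtain ⟨t, ht⟩ := exists_eq_mul_of_setOf_mul_eq hc.2.1.symm
  calc c * a * a = c * a * c * t := by rw [mul_assoc (c * a), ← ht]
    _ = a := by rw [hc.inv_mul_self_mul_inv, ht]

end IsCoreInverse

theorem stmt_13 {R : Type*} [Ring R] [StarRing R] (a c : R) (hc : IsCoreInverse a c) :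
    (a + 1 - a * c) * (c + 1 - c * a) = 1 ∧
      (c + 1 - c * a) * (a + 1 - a * c) = 1 :=
  ⟨add_one_sub_mul_mul_add_one_sub_mul_eq_one hc.1 hc.self_mul_inv_mul_inv,
    add_one_sub_mul_mul_add_one_sub_mul_eq_one hc.inv_mul_self_mul_inv hc.inv_mul_self_mul_self⟩
end

section
/- Let R be a unital ring with involution, a ∈ R, and n ≥ 1. Then a is an EP element (Moore-Penrose invertible and group invertible with a† = a#) if and only if there exists a Hermitian element p such that pa = ap = 0 and a^n + p is invertible. -/
section

variable {R : Type*} [Ring R]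

namespace IsGroupInverse

variable {a x : R}

theorem symm (h : IsGroupInverse a x) : IsGroupInverse x a :=
  ⟨h.2.1, h.1, h.2.2.symm⟩

theorem commute (h : IsGroupInverse a x) : Commute a x :=
  h.2.2

theorem isIdempotentElem_mul (h : IsGroupInverse a x) : IsIdempotentElem (a * x) := by
  rw [IsIdempotentElem, ← mul_assoc, h.1]

theorem one_sub_mul_mul (h : IsGroupInverse a x) : (1 - a * x) * a = 0 := by
  rw [sub_mul, one_mul, h.1, sub_self]

theorem mul_one_sub_mul (h : IsGroupInverse a x) : a * (1 - a * x) = 0 := by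
  rw [mul_sub, mul_one, h.2.2, ← mul_assoc, h.1, sub_self]

theorem pow_succ_add_one_sub_mul_mul (h : IsGroupInverse a x) (n : ℕ) :
    (a ^ (n + 1) + (1 - a * x)) * (x ^ (n + 1) + (1 - a * x)) = 1 := by
  have hpow : a ^ (n + 1) * x ^ (n + 1) = a * x := by
    rw [← h.commute.mul_pow, h.isIdempotentElem_mul.pow_succ_eq]
  have hleft : a ^ (n + 1) * (1 - a * x) = 0 := by
    rw [pow_succ, mul_assoc, h.mul_one_sub_mul, mul_zero]
  have hright : (1 - a * x) * x ^ (n + 1) = 0 := by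
    rw [pow_succ', ← mul_assoc, h.2.2, h.symm.one_sub_mul_mul, zero_mul]
  rw [add_mul, mul_add, mul_add, hpow, hleft, hright, h.isIdempotentElem_mul.one_sub.eq]
  abel

theorem isUnit_pow_succ_add_one_sub_mul (h : IsGroupInverse a x) (n : ℕ) :
    IsUnit (a ^ (n + 1) + (1 - a * x)) := by
  have hsymm := h.symm.pow_succ_add_one_sub_mul_mul n
  rw [← h.2.2] at hsymm
  exact ⟨⟨_, _, h.pow_succ_add_one_sub_mul_mul n, hsymm⟩, rfl⟩

theorem isMPInverse [StarRing R] (h : IsGroupInverse a x) (hs : IsSelfAdjoint (a * x)) :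
    IsMPInverse a x :=
  ⟨h.1, h.2.1, hs, h.2.2 ▸ hs⟩

end IsGroupInverse

theorem IsMPInverse.isSelfAdjoint_one_sub_mul [StarRing R] {a x : R} (h : IsMPInverse a x) :
    IsSelfAdjoint (1 - a * x) :=
  (IsSelfAdjoint.one R).sub h.2.2.1

theorem mul_mul_mul_eq_of_mul_mul_eq {a y : R} (h : a * y * a = a) : a * (y * a * y) = a * y := by
  rw [← mul_assoc, ← mul_assoc, h]

theorem isGroupInverse_mul_mul_of_commute {a y : R} (hc : Commute a y) (h : a * y * a = a) :
    IsGroupInverse a (y * a * y) := by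
  have hay := mul_mul_mul_eq_of_mul_mul_eq h
  have hya : y * a * y * a = a * y := by rw [mul_assoc, ← hc.eq, ← mul_assoc, h, hc.eq]
  refine ⟨by rw [hay, h], ?_, by rw [hay, hya]⟩
  calc y * a * y * a * (y * a * y) = y * (a * y * a) * (y * a * y) := by simp only [mul_assoc]
    _ = y * a * (y * a * y) := by rw [h]
    _ = y * (a * y * a) * y := by simp only [mul_assoc]
    _ = y * a * y := by rw [h]

section Annihilator

variable {a p : R}

theorem commute_pow_add_of_mul_eq_zero (hpa : p * a = 0) (hap : a * p = 0) (n : ℕ) :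
    Commute a (a ^ n + p) := by
  show a * (a ^ n + p) = (a ^ n + p) * a
  rw [mul_add, add_mul, hap, hpa, ← pow_succ, ← pow_succ']

theorem mul_pow_succ_add_of_mul_eq_zero (hpa : p * a = 0) (n : ℕ) :
    p * (a ^ (n + 1) + p) = p * p := by
  rw [mul_add, pow_succ', ← mul_assoc, hpa, zero_mul, zero_add]

variable {n : ℕ} {u : Rˣ}

theorem pow_succ_mul_units_inv (hu : (u : R) = a ^ (n + 1) + p) :
    a ^ (n + 1) * ↑u⁻¹ = 1 - p * ↑u⁻¹ := by
  rw [eq_sub_iff_add_eq, ← add_mul, ← hu, u.mul_inv]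

theorem commute_units_inv_of_mul_eq_zero (hpa : p * a = 0) (hap : a * p = 0)
    (hu : (u : R) = a ^ (n + 1) + p) : Commute a ↑u⁻¹ :=
  (hu ▸ commute_pow_add_of_mul_eq_zero hpa hap (n + 1)).units_inv_right

theorem mul_pow_mul_units_inv_mul (hpa : p * a = 0) (hap : a * p = 0)
    (hu : (u : R) = a ^ (n + 1) + p) : a * (a ^ n * ↑u⁻¹) * a = a := by
  rw [← mul_assoc, ← pow_succ', pow_succ_mul_units_inv hu, sub_mul, one_mul, mul_assoc,
    ← (commute_units_inv_of_mul_eq_zero hpa hap hu).eq, ← mul_assoc, hpa, zero_mul, sub_zero]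

theorem isSelfAdjoint_mul_units_inv [StarRing R] (hp : IsSelfAdjoint p) (hpa : p * a = 0)
    (hu : (u : R) = a ^ (n + 1) + p) : IsSelfAdjoint (p * ↑u⁻¹) := by
  have hpp : p = p * (p * ↑u⁻¹) := by
    rw [← mul_assoc, ← mul_pow_succ_add_of_mul_eq_zero hpa n, ← hu, mul_assoc, u.mul_inv, mul_one]
  have hpp' : p = star (p * ↑u⁻¹) * p := by
    simpa only [star_mul, hp.star_eq] using congrArg star hpp
  have : p * ↑u⁻¹ = star (p * ↑u⁻¹) * (p * ↑u⁻¹) := by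
    rw [← mul_assoc, ← hpp']
  exact this ▸ IsSelfAdjoint.star_mul_self _

end Annihilator

end

theorem stmt_15 {R : Type*} [Ring R] [StarRing R] (a : R) (n : ℕ) (hn : 1 ≤ n) :
    (∃ x : R, IsMPInverse a x ∧ IsGroupInverse a x) ↔
      (∃ p : R, star p = p ∧ p * a = 0 ∧ a * p = 0 ∧ IsUnit (a ^ n + p)) := by
  obtain ⟨m, rfl⟩ := Nat.exists_eq_add_of_le' hn
  constructor
  · rintro ⟨x, hmp, hg⟩
    exact ⟨1 - a * x, hmp.isSelfAdjoint_one_sub_mul, hg.one_sub_mul_mul, hg.mul_one_sub_mul,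
      hg.isUnit_pow_succ_add_one_sub_mul m⟩
  · rintro ⟨p, hp, hpa, hap, u, hu⟩
    have hinner := mul_pow_mul_units_inv_mul hpa hap hu
    have hg := isGroupInverse_mul_mul_of_commute
      (((Commute.refl a).pow_right m).mul_right (commute_units_inv_of_mul_eq_zero hpa hap hu)) hinner
    refine ⟨_, hg.isMPInverse ?_, hg⟩
    rw [mul_mul_mul_eq_of_mul_mul_eq hinner, ← mul_assoc, ← pow_succ', pow_succ_mul_units_inv hu]
    exact (IsSelfAdjoint.one R).sub (isSelfAdjoint_mul_units_inv hp hpa hu)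
end
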